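/- arXiv:2507.05431 — 2 statements merged into one kernel-verified Lean document; each statement's English description precedes it below -/
import Mathlib

section
/- A probability measure μ on Ω = {-1,+1}^(Z^d) satisfies the Gaussian concentration bound with constant C = 0 (i.e., log ∫ exp(f - ∫ f dμ) dμ ≤ 0 for all local functions f) if and only if μ is a Dirac measure concentrated on a single configuration σ ∈ Ω. -/
open MeasureTheory Filter
open scoped ENNReal

/-- Spatial configurations: spins (encoded as `Bool`, `true` = +1) indexed by `ι`. -/
abbrev Config (ι : Type*) := ι → Bool

/-- The lattice `ℤ^d`. -/
abbrev Site (d : ℕ) := Fin d → ℤ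

/-- Spin value `±1` of a Boolean. -/
noncomputable def spin (b : Bool) : ℝ := if b then 1 else -1

/-- Flip the spin of `σ` at site `x`. -/
def flipAt {ι : Type*} [DecidableEq ι] (σ : Config ι) (x : ι) : Config ι :=
  Function.update σ x (!σ x)

/-- Oscillation `δ_x f = sup_σ (f(σ^{(x)}) - f(σ))`. -/
noncomputable def osc {ι : Type*} [DecidableEq ι] (f : Config ι → ℝ) (x : ι) : ℝ :=
  ⨆ σ : Config ι, (f (flipAt σ x) - f σ)

/-- `‖δ f‖₂²  = ∑_x (δ_x f)²`. -/
noncomputable def oscNormSq {ι : Type*} [DecidableEq ι] (f : Config ι → ℝ) : ℝ :=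
  ∑' x : ι, osc f x ^ 2

/-- `‖δ f‖₁ = ∑_x δ_x f`. -/
noncomputable def oscNorm1 {ι : Type*} [DecidableEq ι] (f : Config ι → ℝ) : ℝ :=
  ∑' x : ι, osc f x

/-- `f` depends only on the coordinates in `Λ` (i.e. `f` is `F_Λ`-measurable). -/
def LocalOn {ι : Type*} (Λ : Finset ι) (f : Config ι → ℝ) : Prop :=
  ∀ σ τ : Config ι, (∀ x ∈ Λ, σ x = τ x) → f σ = f τ

/-- `f` is a local function. -/
def IsLocal {ι : Type*} (f : Config ι → ℝ) : Prop := ∃ Λ : Finset ι, LocalOn Λ f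

/-- Gaussian concentration bound with constant `C`:
`log ∫ e^{f - ∫ f dμ} dμ ≤ (C/2) ‖δ f‖₂²` for every local function `f`. -/
def GCB {ι : Type*} [DecidableEq ι] (μ : Measure (Config ι)) (C : ℝ) : Prop :=
  ∀ f : Config ι → ℝ, IsLocal f →
    Real.log (∫ σ, Real.exp (f σ - ∫ τ, f τ ∂μ) ∂μ) ≤ C / 2 * oscNormSq f

/-- The cylinder set of configurations agreeing with `b` on `Λ`. -/
def cyl {ι : Type*} (Λ : Finset ι) (b : ι → Bool) : Set (Config ι) :=
  {σ | ∀ x ∈ Λ, σ x = b x}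

/-- Integrating `e^t ≥ 1 + t`, with equality only at `t = 0`, along `t = f - ∫ f`. -/
lemma ae_eq_integral_of_integral_exp_sub_le_one {α : Type*} [MeasurableSpace α]
    {μ : Measure α} [IsProbabilityMeasure μ] {f : α → ℝ} (hf : Integrable f μ)
    (hexp : Integrable (fun x => Real.exp (f x - ∫ y, f y ∂μ)) μ)
    (hle : ∫ x, Real.exp (f x - ∫ y, f y ∂μ) ∂μ ≤ 1) :
    ∀ᵐ x ∂μ, f x = ∫ y, f y ∂μ := by
  set g : α → ℝ := fun x => f x - ∫ y, f y ∂μ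
  have hg : Integrable g μ := hf.sub (integrable_const _)
  have hg_mean : ∫ x, g x ∂μ = 0 := by
    simp [g, integral_sub hf (integrable_const _)]
  have hgap_nonneg : ∀ x, 0 ≤ Real.exp (g x) - (g x + 1) :=
    fun x => sub_nonneg.2 (Real.add_one_le_exp (g x))
  have hg₁ : Integrable (fun x => g x + 1) μ := hg.add (integrable_const 1)
  have hgap_int : Integrable (fun x => Real.exp (g x) - (g x + 1)) μ := hexp.sub hg₁
  have hgap_zero : ∫ x, (Real.exp (g x) - (g x + 1)) ∂μ = 0 := by
    refine le_antisymm ?_ (integral_nonneg hgap_nonneg)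
    rw [integral_sub hexp hg₁, integral_add hg (integrable_const 1), hg_mean]
    simpa using hle
  filter_upwards [(integral_eq_zero_iff_of_nonneg hgap_nonneg hgap_int).1 hgap_zero] with x hx
  by_contra hne
  exact (sub_pos.2 (Real.add_one_lt_exp (sub_ne_zero.2 hne))).ne' hx

lemma integrable_comp_eval {ι : Type*} {μ : Measure (Config ι)} [IsFiniteMeasure μ]
    (g : Bool → ℝ) (x : ι) : Integrable (fun σ : Config ι => g (σ x)) μ :=
  Integrable.of_finite.comp_measurable (measurable_pi_apply x)

lemma spin_injective : Function.Injective spin := by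
  intro a b
  cases a <;> cases b <;> norm_num [spin]

lemma IsLocal.measurable {ι : Type*} {f : Config ι → ℝ} (hf : IsLocal f) : Measurable f := by
  classical
  obtain ⟨Λ, hΛ⟩ := hf
  have hfactor : f = (fun y : Λ → Bool => f fun i => if h : i ∈ Λ then y ⟨i, h⟩ else false) ∘
      fun σ (i : Λ) => σ i := by
    funext σ
    exact hΛ σ _ fun x hx => by simp [hx]
  rw [hfactor]
  exact (measurable_of_countable _).comp
    (measurable_pi_lambda _ fun i => measurable_pi_apply (i : ι))

lemma gcb_dirac {ι : Type*} [DecidableEq ι] (σ₀ : Config ι) {C : ℝ} (hC : 0 ≤ C) :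
    GCB (Measure.dirac σ₀) C := by
  intro f hf
  have hmeas : Measurable f := hf.measurable
  rw [integral_dirac' f σ₀ hmeas.stronglyMeasurable,
    integral_dirac' (fun σ => Real.exp (f σ - f σ₀)) σ₀ (by fun_prop),
    sub_self, Real.exp_zero, Real.log_one]
  exact mul_nonneg (by positivity) (tsum_nonneg fun x => sq_nonneg _)

lemma GCB.ae_apply_eq_of_zero {ι : Type*} [DecidableEq ι] {μ : Measure (Config ι)}
    [IsProbabilityMeasure μ] (h : GCB μ 0) (x : ι) : ∃ b : Bool, ∀ᵐ σ ∂μ, σ x = b := by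
  set f : Config ι → ℝ := fun σ => spin (σ x)
  have hexp : Integrable (fun σ => Real.exp (f σ - ∫ τ, f τ ∂μ)) μ :=
    integrable_comp_eval (fun b => Real.exp (spin b - ∫ τ, f τ ∂μ)) x
  have hle : ∫ σ, Real.exp (f σ - ∫ τ, f τ ∂μ) ∂μ ≤ 1 := by
    have hlog := h f ⟨{x}, fun σ τ hστ => congrArg spin (hστ x (Finset.mem_singleton_self x))⟩
    rw [zero_div, zero_mul] at hlog
    exact (Real.log_nonpos_iff (integral_exp_pos hexp).le).1 hlog
  have hconst := ae_eq_integral_of_integral_exp_sub_le_one (integrable_comp_eval spin x) hexp hle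
  obtain ⟨σ₀, hσ₀⟩ := hconst.exists
  exact ⟨σ₀ x, by filter_upwards [hconst] with σ hσ using spin_injective (hσ.trans hσ₀.symm)⟩

lemma GCB.eq_dirac_of_zero {ι : Type*} [DecidableEq ι] [Countable ι] {μ : Measure (Config ι)}
    [IsProbabilityMeasure μ] (h : GCB μ 0) : ∃ σ : Config ι, μ = Measure.dirac σ := by
  choose b hb using h.ae_apply_eq_of_zero
  have hae : ∀ᵐ σ ∂μ, σ = b := by
    filter_upwards [ae_all_iff.2 hb] with σ hσ using funext hσ
  exact ⟨b, by simpa using (ProbabilityTheory.hasLaw_dirac_of_ae_eq (X := id) hae).map_eq⟩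

/-- a probability measure on `{-1,+1}^{ℤ^d}` satisfies `GCB(0)` if and
only if it is a Dirac measure concentrated on a single configuration. -/
theorem gcb_zero_iff_dirac {d : ℕ} (μ : Measure (Config (Site d)))
    [IsProbabilityMeasure μ] :
    GCB μ 0 ↔ ∃ σ : Config (Site d), μ = Measure.dirac σ := by
  refine ⟨GCB.eq_dirac_of_zero, ?_⟩
  rintro ⟨σ, rfl⟩
  exact gcb_dirac σ le_rfl
end

section
/- If a translation-invariant probability measure μ on {-1,+1}^(Z^d) satisfies GCB(C), then for every translation-invariant probability measure ν, the lower relative entropy density satisfies s_*(ν|μ) ≥ d̄(ν,μ)²/(2C), where d̄ is the Dobrushin distance. In particular ν ≠ μ implies s_*(ν|μ) > 0. -/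
open MeasureTheory Filter
open scoped ENNReal

/-- The shift (translation) of a configuration by `a ∈ ℤ^d`. -/
def shift {d : ℕ} (a : Site d) (σ : Config (Site d)) : Config (Site d) :=
  fun x => σ (x + a)

/-- Translation invariance of a measure on `{-1,+1}^{ℤ^d}`. -/
def TransInv {d : ℕ} (μ : Measure (Config (Site d))) : Prop :=
  ∀ a : Site d, μ.map (shift a) = μ

/-- The cube `C_n = [-n,n]^d ∩ ℤ^d` as a finite set of sites. -/
noncomputable def cube (d n : ℕ) : Finset (Site d) :=
  Fintype.piFinset fun _ : Fin d => Finset.Icc (-(n : ℤ)) (n : ℤ)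

/-- The relative entropy `S_Λ(ν|μ)` of the `Λ`-marginals (in `[0,∞]`,
`∞` unless `ν_Λ ≪ μ_Λ`). -/
noncomputable def relEntVol {ι : Type*} [DecidableEq ι]
    (ν μ : Measure (Config ι)) (Λ : Finset ι) : ℝ≥0∞ := by
  classical
  exact
    if ∀ b : ι → Bool, μ (cyl Λ b) = 0 → ν (cyl Λ b) = 0 then
      ENNReal.ofReal (∑ b : Λ → Bool,
        (ν (cyl Λ fun x => if h : x ∈ Λ then b ⟨x, h⟩ else false)).toReal *
          Real.log ((ν (cyl Λ fun x => if h : x ∈ Λ then b ⟨x, h⟩ else false)).toReal /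
            (μ (cyl Λ fun x => if h : x ∈ Λ then b ⟨x, h⟩ else false)).toReal))
    else ⊤

/-- The lower relative entropy density `s_*(ν|μ) = liminf_n S_{C_n}(ν|μ)/|C_n|`. -/
noncomputable def sStar {d : ℕ} (ν μ : Measure (Config (Site d))) : ℝ≥0∞ :=
  Filter.liminf (fun n : ℕ => relEntVol ν μ (cube d n) / ((cube d n).card : ℝ≥0∞))
    Filter.atTop

/-- The Dobrushin distance
`d̄(ν,μ) = sup { ∫ f dμ - ∫ f dν : ‖δ f‖₁ ≤ 1 }` (over local functions). -/
noncomputable def dbar {d : ℕ} (ν μ : Measure (Config (Site d))) : ℝ :=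
  ⨆ f : {f : Config (Site d) → ℝ // IsLocal f ∧ oscNorm1 f ≤ 1},
    (∫ σ, (f : Config (Site d) → ℝ) σ ∂μ - ∫ σ, (f : Config (Site d) → ℝ) σ ∂ν)

/-!
Fix a local `f` with `‖δ f‖₁ ≤ 1`, based in the cube `C_m`, and put `D = ∫ f dμ - ∫ f dν`. The
block sum `g = t ∑_{a ∈ C_k} f ∘ shift a` is local on `C_{m+k}`, and every site sees the
oscillations of the translates with total weight at most `‖δ f‖₁`, so `‖δ g‖₂² ≤ t² |C_k|`.
The Donsker–Varadhan inequality for the `C_{m+k}`-marginals, translation invariance and GCB give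
`S_{C_{m+k}}(ν|μ) ≥ |C_k| (-t D - C t² / 2)`, which is `|C_k| D² / (2C)` at `t = -D / C`. As
`|C_k| / |C_{m+k}| → 1`, this yields `s_*(ν|μ) ≥ D² / (2C)` for every admissible `f`. If `ν ≠ μ`,
the two measures differ on a cylinder event `B` based on some `Λ`, and `1_B / (|Λ| + 1)` is an
admissible `f` with `D ≠ 0`.
-/

section LocalFunctions

variable {ι : Type*} {Λ : Finset ι} {g : Config ι → ℝ}

theorem LocalOn.mono {Λ' : Finset ι} (hg : LocalOn Λ g) (h : Λ ⊆ Λ') : LocalOn Λ' g :=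
  fun σ τ hστ => hg σ τ fun x hx => hστ x (h hx)

theorem LocalOn.comp (hg : LocalOn Λ g) (φ : ℝ → ℝ) : LocalOn Λ (φ ∘ g) :=
  fun σ τ hστ => congrArg φ (hg σ τ hστ)

variable [DecidableEq ι]

def extendFalse (Λ : Finset ι) (b : Λ → Bool) : Config ι :=
  fun x => if h : x ∈ Λ then b ⟨x, h⟩ else false

noncomputable def marginal (μ : Measure (Config ι)) (Λ : Finset ι) : Measure (Λ → Bool) :=
  μ.map Λ.restrict

instance (μ : Measure (Config ι)) [IsProbabilityMeasure μ] (Λ : Finset ι) :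
    IsProbabilityMeasure (marginal μ Λ) :=
  Measure.isProbabilityMeasure_map (Finset.measurable_restrict Λ).aemeasurable

theorem cyl_extendFalse (Λ : Finset ι) (b : Λ → Bool) :
    cyl Λ (extendFalse Λ b) = Λ.restrict ⁻¹' ({b} : Set (Λ → Bool)) := by
  ext σ
  simp only [cyl, extendFalse, Set.mem_ofPred_eq, Set.mem_preimage, Set.mem_singleton_iff,
    funext_iff, Finset.restrict, Subtype.forall]
  exact forall₂_congr fun x hx => by rw [dif_pos hx]

theorem measure_cyl_extendFalse (μ : Measure (Config ι)) (Λ : Finset ι) (b : Λ → Bool) :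
    μ (cyl Λ (extendFalse Λ b)) = marginal μ Λ {b} := by
  rw [marginal, Measure.map_apply (Finset.measurable_restrict Λ) (measurableSet_singleton b),
    cyl_extendFalse]

theorem LocalOn.comp_restrict (hg : LocalOn Λ g) : (g ∘ extendFalse Λ) ∘ Λ.restrict = g :=
  funext fun σ => hg _ σ fun x hx => by simp [extendFalse, hx]

theorem LocalOn.measurable (hg : LocalOn Λ g) : Measurable g :=
  hg.comp_restrict ▸ (measurable_of_finite _).comp (Finset.measurable_restrict Λ)

theorem LocalOn.integrable (hg : LocalOn Λ g) (μ : Measure (Config ι)) [IsFiniteMeasure μ] :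
    Integrable g μ :=
  hg.comp_restrict ▸ (integrable_map_measure (measurable_of_finite _).aestronglyMeasurable
    (Finset.measurable_restrict Λ).aemeasurable).1 .of_finite

theorem LocalOn.integral_eq_sum (hg : LocalOn Λ g) (μ : Measure (Config ι))
    [IsFiniteMeasure μ] :
    ∫ σ, g σ ∂μ = ∑ b, (marginal μ Λ).real {b} * g (extendFalse Λ b) := by
  conv_lhs => rw [← hg.comp_restrict]
  change ∫ σ, (g ∘ extendFalse Λ) (Λ.restrict σ) ∂μ = _
  rw [marginal, ← integral_map (Finset.measurable_restrict Λ).aemeasurable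
    (measurable_of_finite _).aestronglyMeasurable, integral_fintype .of_finite]
  rfl

end LocalFunctions

section DonskerVaradhan

open Real

theorem mul_sub_mul_log_sub_mul_log_div_le {p q Z : ℝ} (h : ℝ) (hp : 0 ≤ p) (hq : 0 ≤ q)
    (hZ : 0 < Z) (hpq : q = 0 → p = 0) :
    p * h - p * log Z - p * log (p / q) ≤ q * exp h / Z - p := by
  rcases hp.eq_or_lt with rfl | hp
  · simpa using by positivity
  have hq : 0 < q := hq.lt_of_ne fun h => hp.ne' (hpq h.symm)
  have key := log_le_sub_one_of_pos (x := q * exp h / (p * Z)) (by positivity)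
  rw [log_div (by positivity) (by positivity), log_mul hq.ne' (exp_pos h).ne', log_exp,
    log_mul hp.ne' hZ.ne'] at key
  have hrhs : p * (q * exp h / (p * Z) - 1) = q * exp h / Z - p := by field_simp
  rw [log_div hp.ne' hq.ne', ← hrhs]
  nlinarith [mul_le_mul_of_nonneg_left key hp.le]

/-- The Donsker–Varadhan variational inequality for distributions on a finite set. -/
theorem sum_mul_sub_log_sum_mul_exp_le {κ : Type*} [Fintype κ] {p q : κ → ℝ} (h : κ → ℝ)
    (hp : ∀ i, 0 ≤ p i) (hq : ∀ i, 0 ≤ q i) (hp1 : ∑ i, p i = 1)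
    (hpq : ∀ i, q i = 0 → p i = 0) :
    ∑ i, p i * h i - log (∑ i, q i * exp (h i)) ≤ ∑ i, p i * log (p i / q i) := by
  set Z := ∑ i, q i * exp (h i)
  have hZ : 0 < Z := by
    obtain ⟨i, -, hi⟩ := Finset.exists_ne_zero_of_sum_ne_zero (hp1.trans_ne one_ne_zero)
    have hqi : 0 < q i := (hq i).lt_of_ne fun h0 => hi (hpq i h0.symm)
    exact Finset.sum_pos' (fun j _ => mul_nonneg (hq j) (exp_pos _).le)
      ⟨i, Finset.mem_univ i, mul_pos hqi (exp_pos _)⟩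
  have hsum := Finset.sum_le_sum fun i (_ : i ∈ Finset.univ) =>
    mul_sub_mul_log_sub_mul_log_div_le (h i) (hp i) (hq i) hZ (hpq i)
  rw [Finset.sum_sub_distrib, Finset.sum_sub_distrib, Finset.sum_sub_distrib, ← Finset.sum_mul,
    ← Finset.sum_div, div_self hZ.ne', hp1] at hsum
  linarith

end DonskerVaradhan

section RelativeEntropy

variable {ι : Type*} [DecidableEq ι] {Λ : Finset ι}

theorem relEntVol_of_forall_cyl {ν μ : Measure (Config ι)}
    (hac : ∀ b : ι → Bool, μ (cyl Λ b) = 0 → ν (cyl Λ b) = 0) :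
    relEntVol ν μ Λ = ENNReal.ofReal (∑ b, (marginal ν Λ).real {b} *
      Real.log ((marginal ν Λ).real {b} / (marginal μ Λ).real {b})) := by
  rw [relEntVol, if_pos hac]
  simp only [measureReal_def, ← measure_cyl_extendFalse]
  rfl

theorem LocalOn.le_relEntVol {g : Config ι → ℝ} (hg : LocalOn Λ g) (ν μ : Measure (Config ι))
    [IsProbabilityMeasure ν] [IsProbabilityMeasure μ] :
    ENNReal.ofReal (∫ σ, g σ ∂ν - ∫ σ, g σ ∂μ -
      Real.log (∫ σ, Real.exp (g σ - ∫ τ, g τ ∂μ) ∂μ)) ≤ relEntVol ν μ Λ := by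
  by_cases hac : ∀ b : ι → Bool, μ (cyl Λ b) = 0 → ν (cyl Λ b) = 0
  swap
  · rw [relEntVol, if_neg hac]
    exact le_top
  rw [relEntVol_of_forall_cyl hac]
  refine ENNReal.ofReal_le_ofReal ?_
  set m := ∫ τ, g τ ∂μ
  have hexp : LocalOn Λ fun σ => Real.exp (g σ - m) := hg.comp fun y => Real.exp (y - m)
  have hpq (b : Λ → Bool) : (marginal μ Λ).real {b} = 0 → (marginal ν Λ).real {b} = 0 := by
    rw [measureReal_eq_zero_iff, measureReal_eq_zero_iff, ← measure_cyl_extendFalse,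
      ← measure_cyl_extendFalse]
    exact hac _
  have hDV := sum_mul_sub_log_sum_mul_exp_le (fun b => g (extendFalse Λ b) - m)
    (fun _ => measureReal_nonneg) (fun _ => measureReal_nonneg) (by simp) hpq
  simp only [mul_sub, Finset.sum_sub_distrib, ← Finset.sum_mul] at hDV
  rw [hg.integral_eq_sum ν, hexp.integral_eq_sum μ]
  simpa using hDV

end RelativeEntropy

section Oscillation

variable {ι : Type*} [DecidableEq ι] {Λ : Finset ι} {g : Config ι → ℝ}

@[simp]
theorem flipAt_flipAt (σ : Config ι) (x : ι) : flipAt (flipAt σ x) x = σ := by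
  simp [flipAt]

theorem LocalOn.flipAt_eq (hg : LocalOn Λ g) (σ : Config ι) {x : ι} (hx : x ∉ Λ) :
    g (flipAt σ x) = g σ :=
  hg _ _ fun _ hy => Function.update_of_ne (ne_of_mem_of_not_mem hy hx) _ _

theorem LocalOn.finite_range (hg : LocalOn Λ g) : (Set.range g).Finite :=
  hg.comp_restrict ▸ (Set.finite_range _).subset (Set.range_comp_subset_range _ _)

theorem LocalOn.le_osc (hg : LocalOn Λ g) (σ : Config ι) (x : ι) :
    g (flipAt σ x) - g σ ≤ osc g x := by
  have hbdd : BddAbove (Set.range fun σ => g (flipAt σ x) - g σ) := by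
    refine (hg.finite_range.image2 (· - ·) hg.finite_range).bddAbove.mono ?_
    rintro _ ⟨τ, rfl⟩
    exact Set.mem_image2_of_mem (Set.mem_range_self _) (Set.mem_range_self _)
  exact le_ciSup hbdd σ

theorem LocalOn.abs_sub_le_osc (hg : LocalOn Λ g) (σ : Config ι) (x : ι) :
    |g (flipAt σ x) - g σ| ≤ osc g x :=
  abs_sub_le_iff.2 ⟨hg.le_osc σ x, by simpa using hg.le_osc (flipAt σ x) x⟩

theorem LocalOn.osc_nonneg (hg : LocalOn Λ g) (x : ι) : 0 ≤ osc g x :=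
  (abs_nonneg _).trans (hg.abs_sub_le_osc (fun _ => false) x)

theorem LocalOn.osc_eq_zero (hg : LocalOn Λ g) {x : ι} (hx : x ∉ Λ) : osc g x = 0 := by
  simp [osc, hg.flipAt_eq _ hx]

theorem LocalOn.summable_osc (hg : LocalOn Λ g) : Summable (osc g) :=
  summable_of_ne_finset_zero fun _ hx => hg.osc_eq_zero hx

theorem LocalOn.oscNorm1_eq_sum (hg : LocalOn Λ g) : oscNorm1 g = ∑ x ∈ Λ, osc g x :=
  tsum_eq_sum fun _ hx => hg.osc_eq_zero hx

theorem LocalOn.oscNormSq_eq_sum (hg : LocalOn Λ g) : oscNormSq g = ∑ x ∈ Λ, osc g x ^ 2 :=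
  tsum_eq_sum fun _ hx => by rw [hg.osc_eq_zero hx, zero_pow two_ne_zero]

theorem LocalOn.sum_osc_comp_le_oscNorm1 (hg : LocalOn Λ g) {e : ι → ι}
    (he : Function.Injective e) (s : Finset ι) : ∑ x ∈ s, osc g (e x) ≤ oscNorm1 g := by
  rw [← Finset.sum_image he.injOn]
  exact hg.summable_osc.sum_le_tsum _ fun x _ => hg.osc_nonneg x

theorem LocalOn.oscNorm1_le_card_mul (hg : LocalOn Λ g) {c : ℝ} (h : ∀ σ τ, g σ - g τ ≤ c) :
    oscNorm1 g ≤ Λ.card * c := by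
  rw [hg.oscNorm1_eq_sum, ← nsmul_eq_mul]
  exact Finset.sum_le_card_nsmul _ _ _ fun x _ => ciSup_le fun σ => h _ σ

end Oscillation

section Lattice

open Filter Topology

variable {d : ℕ}

theorem measurable_shift (a : Site d) : Measurable (shift a) :=
  measurable_pi_lambda _ fun x => measurable_pi_apply (x + a)

theorem shift_flipAt (a : Site d) (σ : Config (Site d)) (x : Site d) :
    shift a (flipAt σ x) = flipAt (shift a σ) (x - a) := by
  funext y
  simp only [shift, flipAt, Function.update_apply, eq_sub_iff_add_eq, sub_add_cancel]

theorem mem_cube {n : ℕ} {x : Site d} : x ∈ cube d n ↔ ∀ i, (x i).natAbs ≤ n := by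
  simp only [cube, Fintype.mem_piFinset, Finset.mem_Icc]
  exact forall_congr' fun i => by omega

theorem add_mem_cube {m k : ℕ} {x y : Site d} (hx : x ∈ cube d m) (hy : y ∈ cube d k) :
    x + y ∈ cube d (m + k) :=
  mem_cube.2 fun i => (Int.natAbs_add_le _ _).trans (add_le_add (mem_cube.1 hx i) (mem_cube.1 hy i))

theorem exists_subset_cube (Λ : Finset (Site d)) : ∃ m, Λ ⊆ cube d m :=
  ⟨Λ.sup fun x => Finset.univ.sup fun i => (x i).natAbs, fun x hx => mem_cube.2 fun i =>
    (Finset.le_sup (f := fun i => (x i).natAbs) (Finset.mem_univ i)).trans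
      (Finset.le_sup (f := fun x => Finset.univ.sup fun i => (x i).natAbs) hx)⟩

theorem card_cube (d n : ℕ) : (cube d n).card = (2 * n + 1) ^ d := by
  have : ((n : ℤ) + 1 + n).toNat = 2 * n + 1 := by omega
  simp [cube, Fintype.card_piFinset, Int.card_Icc, this]

theorem tendsto_card_cube_sub_div_card_cube (d m : ℕ) :
    Tendsto (fun n : ℕ => ((cube d (n - m)).card : ℝ) / (cube d n).card) atTop (𝓝 1) := by
  have hden : Tendsto (fun n : ℕ => 2 * (n : ℝ) + 1) atTop atTop :=
    tendsto_atTop_add_const_right _ _ (tendsto_natCast_atTop_atTop.const_mul_atTop two_pos)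
  have hbase : Tendsto (fun n : ℕ => (1 - 2 * (m : ℝ) / (2 * n + 1)) ^ d) atTop (𝓝 1) := by
    simpa using ((tendsto_const_nhds.div_atTop hden).const_sub 1).pow d
  refine hbase.congr' ((eventually_ge_atTop m).mono fun n hn => ?_)
  have : (0 : ℝ) < 2 * n + 1 := by positivity
  simp only [card_cube]
  push_cast [Nat.cast_sub hn]
  rw [← div_pow]
  congr 1
  field_simp
  ring

theorem TransInv.integral_comp_shift {μ : Measure (Config (Site d))} (hμ : TransInv μ)
    (a : Site d) {f : Config (Site d) → ℝ} (hf : Measurable f) :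
    ∫ σ, f (shift a σ) ∂μ = ∫ σ, f σ ∂μ := by
  conv_rhs => rw [← hμ a]
  exact (integral_map (measurable_shift a).aemeasurable
    (hμ a ▸ hf.aestronglyMeasurable)).symm

end Lattice

section BlockSum

variable {d : ℕ} {f : Config (Site d) → ℝ}

def blockSum (f : Config (Site d) → ℝ) (A : Finset (Site d)) (σ : Config (Site d)) : ℝ :=
  ∑ a ∈ A, f (shift a σ)

theorem LocalOn.blockSum_cube {m : ℕ} (hf : LocalOn (cube d m) f) (k : ℕ) :
    LocalOn (cube d (m + k)) (blockSum f (cube d k)) :=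
  fun _ _ hστ => Finset.sum_congr rfl fun _ ha => hf _ _ fun _ hy => hστ _ (add_mem_cube hy ha)

theorem TransInv.integral_blockSum {ρ : Measure (Config (Site d))} [IsFiniteMeasure ρ]
    (hρ : TransInv ρ) {Λ : Finset (Site d)} (hf : LocalOn Λ f) (A : Finset (Site d)) :
    ∫ σ, blockSum f A σ ∂ρ = A.card * ∫ σ, f σ ∂ρ := by
  simp only [blockSum]
  rw [integral_finsetSum _ fun a _ =>
    ((hρ a).symm ▸ hf.integrable ρ).comp_measurable (measurable_shift a)]
  simp [hρ.integral_comp_shift _ hf.measurable]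

theorem LocalOn.abs_blockSum_flipAt_sub_le {Λ : Finset (Site d)} (hf : LocalOn Λ f)
    (A : Finset (Site d)) (σ : Config (Site d)) (x : Site d) :
    |blockSum f A (flipAt σ x) - blockSum f A σ| ≤ ∑ a ∈ A, osc f (x - a) := by
  rw [blockSum, blockSum, ← Finset.sum_sub_distrib]
  refine (Finset.abs_sum_le_sum_abs _ _).trans (Finset.sum_le_sum fun a _ => ?_)
  rw [shift_flipAt]
  exact hf.abs_sub_le_osc _ _

theorem LocalOn.oscNormSq_const_mul_blockSum_le {m : ℕ} (hf : LocalOn (cube d m) f)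
    (hf1 : oscNorm1 f ≤ 1) (k : ℕ) (t : ℝ) :
    oscNormSq (fun σ => t * blockSum f (cube d k) σ) ≤ t ^ 2 * (cube d k).card := by
  set S : Site d → ℝ := fun x => ∑ a ∈ cube d k, osc f (x - a)
  have hS0 (x : Site d) : 0 ≤ S x := Finset.sum_nonneg fun a _ => hf.osc_nonneg _
  have hS1 (x : Site d) : S x ≤ 1 :=
    (hf.sum_osc_comp_le_oscNorm1 (sub_right_injective (b := x)) _).trans hf1
  have hg : LocalOn (cube d (m + k)) fun σ => t * blockSum f (cube d k) σ :=
    (hf.blockSum_cube k).comp (t * ·)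
  have hosc (x : Site d) : osc (fun σ => t * blockSum f (cube d k) σ) x ≤ |t| * S x :=
    ciSup_le fun σ => by
      rw [← mul_sub]
      exact (le_abs_self _).trans (abs_mul t _ ▸
        mul_le_mul_of_nonneg_left (hf.abs_blockSum_flipAt_sub_le _ σ x) (abs_nonneg t))
  rw [hg.oscNormSq_eq_sum]
  calc ∑ x ∈ cube d (m + k), osc (fun σ => t * blockSum f (cube d k) σ) x ^ 2
      ≤ ∑ x ∈ cube d (m + k), t ^ 2 * S x := Finset.sum_le_sum fun x _ => by
        calc _ ≤ (|t| * S x) ^ 2 := pow_le_pow_left₀ (hg.osc_nonneg x) (hosc x) 2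
          _ = t ^ 2 * (S x * S x) := by rw [mul_pow, sq_abs, sq (S x)]
          _ ≤ t ^ 2 * S x := by gcongr; exact mul_le_of_le_one_left (hS0 x) (hS1 x)
    _ = t ^ 2 * ∑ a ∈ cube d k, ∑ x ∈ cube d (m + k), osc f (x - a) := by
        rw [← Finset.mul_sum, Finset.sum_comm]
    _ ≤ t ^ 2 * ∑ a ∈ cube d k, (1 : ℝ) := by
        gcongr with a
        exact (hf.sum_osc_comp_le_oscNorm1 (sub_left_injective (b := a)) _).trans hf1
    _ = t ^ 2 * (cube d k).card := by simp

end BlockSum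

section EntropyDensity

open Filter

variable {d : ℕ} {μ ν : Measure (Config (Site d))} {C : ℝ} {f : Config (Site d) → ℝ}

theorem card_mul_sq_div_le_relEntVol [IsProbabilityMeasure μ] [IsProbabilityMeasure ν]
    (hμ : TransInv μ) (hν : TransInv ν) (hC : 0 < C) (hgcb : GCB μ C) {m : ℕ}
    (hf : LocalOn (cube d m) f) (hf1 : oscNorm1 f ≤ 1) (k : ℕ) :
    ENNReal.ofReal ((cube d k).card * ((∫ σ, f σ ∂μ - ∫ σ, f σ ∂ν) ^ 2 / (2 * C))) ≤
      relEntVol ν μ (cube d (m + k)) := by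
  set t := (∫ σ, f σ ∂ν - ∫ σ, f σ ∂μ) / C
  set g : Config (Site d) → ℝ := fun σ => t * blockSum f (cube d k) σ
  have hg : LocalOn (cube d (m + k)) g := (hf.blockSum_cube k).comp (t * ·)
  have hint {ρ : Measure (Config (Site d))} [IsProbabilityMeasure ρ] (hρ : TransInv ρ) :
      ∫ σ, g σ ∂ρ = t * ((cube d k).card * ∫ σ, f σ ∂ρ) := by
    rw [integral_const_mul, hρ.integral_blockSum hf]
  have hlog : Real.log (∫ σ, Real.exp (g σ - ∫ τ, g τ ∂μ) ∂μ) ≤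
      C / 2 * (t ^ 2 * (cube d k).card) :=
    (hgcb g ⟨_, hg⟩).trans (by gcongr; exact hf.oscNormSq_const_mul_blockSum_le hf1 k t)
  refine le_trans (ENNReal.ofReal_le_ofReal ?_) (hg.le_relEntVol ν μ)
  calc (cube d k).card * ((∫ σ, f σ ∂μ - ∫ σ, f σ ∂ν) ^ 2 / (2 * C))
      = t * ((cube d k).card * ∫ σ, f σ ∂ν) - t * ((cube d k).card * ∫ σ, f σ ∂μ) -
          C / 2 * (t ^ 2 * (cube d k).card) := by
        simp only [t]
        field_simp
        ring
    _ ≤ _ := by linarith [hint hν, hint hμ]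

theorem ofReal_le_sStar {b : ℝ} {m : ℕ}
    (h : ∀ k, ENNReal.ofReal ((cube d k).card * b) ≤ relEntVol ν μ (cube d (m + k))) :
    ENNReal.ofReal b ≤ sStar ν μ := by
  have hlim : Tendsto (fun n : ℕ => ENNReal.ofReal (b * ((cube d (n - m)).card / (cube d n).card)))
      atTop (nhds (ENNReal.ofReal b)) := by
    simpa using ENNReal.tendsto_ofReal
      ((tendsto_card_cube_sub_div_card_cube d m).const_mul b)
  rw [← hlim.liminf_eq]
  refine liminf_le_liminf ((eventually_ge_atTop m).mono fun n hn => ?_)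
  have hcard : (0 : ℝ) < (cube d n).card := by rw [card_cube]; positivity
  rw [← mul_div_assoc, mul_comm b, ENNReal.ofReal_div_of_pos hcard, ENNReal.ofReal_natCast]
  gcongr
  simpa [Nat.add_sub_cancel' hn] using h (n - m)

theorem ofReal_sq_div_le_sStar [IsProbabilityMeasure μ] [IsProbabilityMeasure ν]
    (hμ : TransInv μ) (hν : TransInv ν) (hC : 0 < C) (hgcb : GCB μ C)
    (hf : IsLocal f) (hf1 : oscNorm1 f ≤ 1) :
    ENNReal.ofReal ((∫ σ, f σ ∂μ - ∫ σ, f σ ∂ν) ^ 2 / (2 * C)) ≤ sStar ν μ := by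
  obtain ⟨Λ, hΛ⟩ := hf
  obtain ⟨m, hm⟩ := exists_subset_cube Λ
  exact ofReal_le_sStar (card_mul_sq_div_le_relEntVol hμ hν hC hgcb (hΛ.mono hm) hf1)

end EntropyDensity

section Main

variable {d : ℕ} {μ ν : Measure (Config (Site d))} {C : ℝ}

theorem ofReal_dbar_sq_div_le_sStar [IsProbabilityMeasure μ] [IsProbabilityMeasure ν]
    (hμ : TransInv μ) (hν : TransInv ν) (hC : 0 < C) (hgcb : GCB μ C) :
    ENNReal.ofReal (dbar ν μ ^ 2 / (2 * C)) ≤ sStar ν μ := by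
  rcases eq_or_ne (sStar ν μ) ⊤ with htop | htop
  · simp [htop]
  set s := (sStar ν μ).toReal
  have hbound (f : {f : Config (Site d) → ℝ // IsLocal f ∧ oscNorm1 f ≤ 1}) :
      ∫ σ, (f : Config (Site d) → ℝ) σ ∂μ - ∫ σ, (f : Config (Site d) → ℝ) σ ∂ν ≤
        √(2 * C * s) := by
    have h := ofReal_sq_div_le_sStar hμ hν hC hgcb f.2.1 f.2.2
    rw [ENNReal.ofReal_le_iff_le_toReal htop, div_le_iff₀ (by positivity)] at h
    exact Real.le_sqrt_of_sq_le (by linarith)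
  have hzero : LocalOn ∅ fun _ : Config (Site d) => (0 : ℝ) := fun _ _ _ => rfl
  let zero : {f : Config (Site d) → ℝ // IsLocal f ∧ oscNorm1 f ≤ 1} :=
    ⟨_, ⟨_, hzero⟩, by simp [hzero.oscNorm1_eq_sum]⟩
  have h0 : 0 ≤ dbar ν μ := by
    simpa [dbar, zero] using le_ciSup ⟨_, Set.forall_mem_range.2 hbound⟩ zero
  have h1 : dbar ν μ ≤ √(2 * C * s) :=
    have : Nonempty {f : Config (Site d) → ℝ // IsLocal f ∧ oscNorm1 f ≤ 1} := ⟨zero⟩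
    ciSup_le hbound
  rw [← ENNReal.ofReal_toReal htop]
  refine ENNReal.ofReal_le_ofReal ((div_le_iff₀ (by positivity)).2 ?_)
  calc dbar ν μ ^ 2 ≤ √(2 * C * s) ^ 2 := pow_le_pow_left₀ h0 h1 2
    _ = s * (2 * C) := by rw [Real.sq_sqrt (by positivity), mul_comm]

theorem sStar_pos_of_ne [IsProbabilityMeasure μ] [IsProbabilityMeasure ν]
    (hμ : TransInv μ) (hν : TransInv ν) (hC : 0 < C) (hgcb : GCB μ C) (hne : ν ≠ μ) :
    0 < sStar ν μ := by
  obtain ⟨B, hB, hμν⟩ : ∃ B ∈ measurableCylinders fun _ : Site d => Bool, μ B ≠ ν B := by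
    by_contra! h
    exact hne (ext_of_generate_finite _ generateFrom_measurableCylinders.symm
      isPiSystem_measurableCylinders h (by simp)).symm
  obtain ⟨Λ, S, -, hBΛ⟩ := (mem_measurableCylinders B).1 hB
  set c : ℝ := ((Λ.card : ℝ) + 1)⁻¹
  set g := B.indicator fun _ => c
  have hg : LocalOn Λ g := fun σ τ hστ => by
    have : Λ.restrict σ = Λ.restrict τ := funext fun x => hστ x x.2
    classical
    simp only [g, hBΛ, Set.indicator_apply, mem_cylinder, this]
  have hc : 0 ≤ c := by positivity
  have hg1 : oscNorm1 g ≤ 1 := by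
    refine (hg.oscNorm1_le_card_mul (c := c) fun σ τ => ?_).trans ?_
    · have hσ : g σ ≤ c := Set.indicator_apply_le' (fun _ => le_rfl) fun _ => hc
      have hτ : 0 ≤ g τ := Set.indicator_nonneg (fun _ _ => hc) τ
      linarith
    · rw [← div_eq_mul_inv, div_le_one (by positivity)]
      linarith
  have hint (ρ : Measure (Config (Site d))) : ∫ σ, g σ ∂ρ = ρ.real B * c :=
    integral_indicator_const _ (MeasurableSet.of_mem_measurableCylinders hB)
  have hdiff : μ.real B - ν.real B ≠ 0 := sub_ne_zero.2 fun h => hμν <|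
    (ENNReal.toReal_eq_toReal_iff' (measure_ne_top _ _) (measure_ne_top _ _)).1 h
  refine lt_of_lt_of_le ?_ (ofReal_sq_div_le_sStar hμ hν hC hgcb ⟨Λ, hg⟩ hg1)
  rw [ENNReal.ofReal_pos, hint, hint, ← sub_mul]
  positivity

end Main

/-- if a translation-invariant probability measure `μ` satisfies
`GCB(C)`, then for every translation-invariant probability measure `ν`,
`s_*(ν|μ) ≥ d̄(ν,μ)²/(2C)`; in particular `ν ≠ μ` implies `s_*(ν|μ) > 0`. -/
theorem entropy_density_dbar_bound {d : ℕ} (μ ν : Measure (Config (Site d)))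
    [IsProbabilityMeasure μ] [IsProbabilityMeasure ν]
    (hμTI : TransInv μ) (hνTI : TransInv ν) (C : ℝ) (hC : 0 < C) (hgcb : GCB μ C) :
    ENNReal.ofReal (dbar ν μ ^ 2 / (2 * C)) ≤ sStar ν μ ∧
    (ν ≠ μ → 0 < sStar ν μ) :=
  ⟨ofReal_dbar_sq_div_le_sStar hμTI hνTI hC hgcb, sStar_pos_of_ne hμTI hνTI hC hgcb⟩
end
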